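/- If (λx.λy.a M₁) is typable with type (B₁ → C₁) ∧ ... ∧ (B_k → C_k) in system D (with λx.λy.a of type (A₁ → B₁ → C₁) ∧ ... ∧ (A_k → B_k → C_k) and M₁ of type A₁ ∧ ... ∧ A_k), then the δ-reduct λy.(λx.a M₁) can be given the same type (B₁ → C₁) ∧ ... ∧ (B_k → C_k), assuming y is not free in M₁. -/
import Mathlib


/-- Untyped λ-terms in de Bruijn representation. -/
inductive Term : Type
  | var : ℕ → Term
  | lam : Term → Term
  | app : Term → Term → Term
  deriving DecidableEq

namespace Term

/-- Shift (lift) all de Bruijn indices ≥ d by one. -/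
def lift (d : ℕ) : Term → Term
  | var n => var (if n < d then n else n + 1)
  | lam t => lam (lift (d + 1) t)
  | app t u => app (lift d t) (lift d u)

/-- Capture-avoiding substitution `t[k := u]` (de Bruijn style). -/
def subst : Term → ℕ → Term → Term
  | var n, k, u => if n = k then u else var (if n < k then n else n - 1)
  | lam t, k, u => lam (subst t (k + 1) (lift 0 u))
  | app t v, k, u => app (subst t k u) (subst v k u)

/-- Swap the de Bruijn indices d and d+1 (exchange of two adjacent binders). -/
def swap (d : ℕ) : Term → Term
  | var n => var (if n = d then d + 1 else if n = d + 1 then d else n)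
  | lam t => lam (swap (d + 1) t)
  | app t u => app (swap d t) (swap d u)

end Term

/-- The four reduction rules. -/
inductive Rule | beta | delta | gamma | assoc

/-- One-step reduction by a given rule (closed under congruence).
β: (λx.M N) ▷ M[x:=N];
δ: (λy.λx.M N) ▷ λx.(λy.M N), x ∉ FV(N);
γ: (λx.M N P) ▷ (λx.(M P) N), x ∉ FV(P);
assoc: (M (λx.N P)) ▷ (λx.(M N) P), x ∉ FV(M).
Freshness conditions are realized by lifting. -/
inductive Step : Rule → Term → Term → Prop
  | beta (M N) : Step .beta (.app (.lam M) N) (Term.subst M 0 N)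
  | delta (M N) : Step .delta (.app (.lam (.lam M)) N)
      (.lam (.app (.lam (Term.swap 0 M)) (Term.lift 0 N)))
  | gamma (M N P) : Step .gamma (.app (.app (.lam M) N) P)
      (.app (.lam (.app M (Term.lift 0 P))) N)
  | assoc (M N P) : Step .assoc (.app M (.app (.lam N) P))
      (.app (.lam (.app (Term.lift 0 M) N)) P)
  | appCongL {r t t'} (u) : Step r t t' → Step r (.app t u) (.app t' u)
  | appCongR {r u u'} (t) : Step r u u' → Step r (.app t u) (.app t u')
  | lamCong {r t t'} : Step r t t' → Step r (.lam t) (.lam t')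

/-- One-step reduction by the union of the four rules. -/
def StepAll (t t' : Term) : Prop := ∃ r, Step r t t'

/-- Strong normalization for the union of β, δ, γ, assoc. -/
def SN (t : Term) : Prop := Acc (fun a b => StepAll b a) t

/-- Strong normalization for β alone. -/
def SNbeta (t : Term) : Prop := Acc (fun a b => Step .beta b a) t

mutual
/-- Simple types: atoms and arrows with simple codomain. -/
inductive STy : Type
  | atom : ℕ → STy
  | arrow : Ty → STy → STy
/-- Types of system D: intersections of simple types. -/
inductive Ty : Type
  | simple : STy → Ty
  | inter : STy → Ty → Ty
end

/-- Typing judgment of system D (contexts are lists of types, de Bruijn). -/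
inductive Typing : List Ty → Term → Ty → Prop
  | var {Γ n A} : Γ[n]? = some A → Typing Γ (.var n) A
  | app {Γ M N A B} : Typing Γ M (.simple (.arrow A B)) → Typing Γ N A →
      Typing Γ (.app M N) (.simple B)
  | lam {Γ M A B} : Typing (A :: Γ) M (.simple B) →
      Typing Γ (.lam M) (.simple (.arrow A B))
  | interI {Γ M A B} : Typing Γ M (.simple A) → Typing Γ M B →
      Typing Γ M (.inter A B)
  | interE1 {Γ M A B} : Typing Γ M (.inter A B) → Typing Γ M (.simple A)
  | interE2 {Γ M A B} : Typing Γ M (.inter A B) → Typing Γ M B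

/-- A term is typable in system D. -/
def Typable (t : Term) : Prop := ∃ Γ A, Typing Γ t A

/-- (H M₁ ... Mₙ). -/
def appList (H : Term) (Ms : List Term) : Term := Ms.foldl .app H

/-- Intersection of a nonempty list of simple types. -/
def interSTy : STy → List STy → Ty
  | s, [] => .simple s
  | s, s' :: l => .inter s (interSTy s' l)

/-- Intersection of two types. -/
def andTy : Ty → Ty → Ty
  | .simple s, u => .inter s u
  | .inter s t, u => .inter s (andTy t u)

/-- Intersection of a nonempty list of types. -/
def interTys : Ty → List Ty → Ty
  | A, [] => A
  | A, A' :: l => andTy A (interTys A' l)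

/-- Aᵢ → (Bᵢ → Cᵢ) from a triple (Aᵢ, Bᵢ, Cᵢ). -/
def mkArr (p : Ty × Ty × STy) : STy := .arrow p.1 (.arrow p.2.1 p.2.2)

/-- Bᵢ → Cᵢ from a triple (Aᵢ, Bᵢ, Cᵢ). -/
def mkBC (p : Ty × Ty × STy) : STy := .arrow p.2.1 p.2.2

/-- Membership of a simple type in an intersection type. -/
def TyMem : STy → Ty → Prop
  | s, .simple s' => s = s'
  | s, .inter s' t => s = s' ∨ TyMem s t

theorem typing_of_mem {Γ t} : ∀ (T : Ty) {s}, Typing Γ t T → TyMem s T →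
    Typing Γ t (.simple s)
  | .simple _, s, h, hm => by cases hm; exact h
  | .inter s' t', s, h, hm => by
    rcases hm with rfl | hm
    · exact .interE1 h
    · exact typing_of_mem t' (.interE2 h) hm

theorem typing_andTy {Γ t} : ∀ (A : Ty) {B}, Typing Γ t (andTy A B) →
    Typing Γ t A ∧ Typing Γ t B
  | .simple s, B, h => ⟨.interE1 h, .interE2 h⟩
  | .inter s t', B, h => by
    obtain ⟨h1, h2⟩ := typing_andTy t' (.interE2 h)
    exact ⟨.interI (.interE1 h) h1, h2⟩

theorem typing_interTys {Γ t} : ∀ {l A}, Typing Γ t (interTys A l) →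
    Typing Γ t A ∧ ∀ A' ∈ l, Typing Γ t A' := by
  intro l
  induction l with
  | nil => intro A h; exact ⟨h, by simp⟩
  | cons A' l ih =>
    intro A h
    rw [interTys] at h
    obtain ⟨h1, h2⟩ := typing_andTy _ h
    obtain ⟨h3, h4⟩ := ih h2
    refine ⟨h1, ?_⟩
    intro B hB
    rcases List.mem_cons.1 hB with rfl | hB
    · exact h3
    · exact h4 _ hB

theorem tymem_interSTy : ∀ {ss s₀ s}, (s = s₀ ∨ s ∈ ss) → TyMem s (interSTy s₀ ss) := by
  intro ss
  induction ss with
  | nil => intro s₀ s h; simp at h; exact h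
  | cons s' ss ih =>
    intro s₀ s h
    rw [interSTy]
    rcases h with rfl | h
    · exact Or.inl rfl
    · rcases List.mem_cons.1 h with rfl | h
      · exact Or.inr (ih (Or.inl rfl))
      · exact Or.inr (ih (Or.inr h))

theorem typing_interSTy {Γ t} : ∀ {ss s}, Typing Γ t (.simple s) →
    (∀ s' ∈ ss, Typing Γ t (.simple s')) → Typing Γ t (interSTy s ss) := by
  intro ss
  induction ss with
  | nil => intro s h _; exact h
  | cons s' ss ih =>
    intro s h hl
    exact .interI h (ih (hl s' (by simp)) (fun s'' hs => hl s'' (by simp [hs])))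

theorem typing_lift {Γ M T} (h : Typing Γ M T) :
    ∀ Δ Γ' B, Γ = Δ ++ Γ' → Typing (Δ ++ B :: Γ') (Term.lift Δ.length M) T := by
  induction h with
  | @var Γ n A h =>
    intro Δ Γ' B hΓ
    subst hΓ
    rw [Term.lift]
    refine .var ?_
    split
    · rw [List.getElem?_append_left ‹_›] at h ⊢
      exact h
    · have hle : Δ.length ≤ n := Nat.le_of_not_lt ‹_›
      rw [List.getElem?_append_right hle] at h
      rw [List.getElem?_append_right (by omega)]
      have : n + 1 - Δ.length = (n - Δ.length) + 1 := by omega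
      rw [this]
      simpa using h
  | app h1 h2 ih1 ih2 =>
    intro Δ Γ' B hΓ
    exact .app (ih1 Δ Γ' B hΓ) (ih2 Δ Γ' B hΓ)
  | @lam Γ M A B h ih =>
    intro Δ Γ' B' hΓ
    refine .lam ?_
    have := ih (A :: Δ) Γ' B' (by simp [hΓ])
    simpa using this
  | interI h1 h2 ih1 ih2 => intro Δ Γ' B hΓ; exact .interI (ih1 Δ Γ' B hΓ) (ih2 Δ Γ' B hΓ)
  | interE1 h ih => intro Δ Γ' B hΓ; exact .interE1 (ih Δ Γ' B hΓ)
  | interE2 h ih => intro Δ Γ' B hΓ; exact .interE2 (ih Δ Γ' B hΓ)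

theorem typing_swap {Γ M T} (h : Typing Γ M T) :
    ∀ Δ A B Γ', Γ = Δ ++ A :: B :: Γ' →
      Typing (Δ ++ B :: A :: Γ') (Term.swap Δ.length M) T := by
  induction h with
  | @var Γ n C h =>
    intro Δ A B Γ' hΓ
    subst hΓ
    rw [Term.swap]
    refine .var ?_
    rcases lt_trichotomy n Δ.length with hn | hn | hn
    · rw [if_neg (by omega), if_neg (by omega)]
      rw [List.getElem?_append_left hn] at h ⊢
      exact h
    · subst hn
      rw [if_pos rfl]
      rw [List.getElem?_append_right (le_refl _)] at h
      rw [List.getElem?_append_right (by omega)]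
      simp at h ⊢
      simpa using h
    · rw [if_neg (by omega)]
      rw [List.getElem?_append_right (by omega)] at h
      by_cases hn1 : n = Δ.length + 1
      · rw [if_pos hn1]
        rw [List.getElem?_append_right (le_refl _)]
        subst hn1
        simp at h ⊢
        simpa using h
      · rw [if_neg hn1]
        rw [List.getElem?_append_right (by omega)]
        have h2 : n - Δ.length = (n - Δ.length - 2) + 2 := by omega
        rw [h2] at h
        rw [h2]
        simpa using h
  | app h1 h2 ih1 ih2 =>
    intro Δ A B Γ' hΓ
    exact .app (ih1 Δ A B Γ' hΓ) (ih2 Δ A B Γ' hΓ)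
  | @lam Γ M C D h ih =>
    intro Δ A B Γ' hΓ
    refine .lam ?_
    have := ih (C :: Δ) A B Γ' (by simp [hΓ])
    simpa using this
  | interI h1 h2 ih1 ih2 => intro Δ A B Γ' hΓ; exact .interI (ih1 Δ A B Γ' hΓ) (ih2 Δ A B Γ' hΓ)
  | interE1 h ih => intro Δ A B Γ' hΓ; exact .interE1 (ih Δ A B Γ' hΓ)
  | interE2 h ih => intro Δ A B Γ' hΓ; exact .interE2 (ih Δ A B Γ' hΓ)

theorem lam_inv {Γ N T} (h : Typing Γ N T) :
    ∀ M, N = .lam M → ∀ s, TyMem s T →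
      ∃ A B, s = .arrow A B ∧ Typing (A :: Γ) M (.simple B) := by
  induction h with
  | var h => intro M hM; cases hM
  | app h1 h2 _ _ => intro M hM; cases hM
  | @lam Γ M' A B h _ =>
    intro M hM s hs
    cases hM
    cases hs
    exact ⟨A, B, rfl, h⟩
  | interI h1 h2 ih1 ih2 =>
    intro M hM s hs
    rcases hs with rfl | hs
    · exact ih1 M hM _ rfl
    · exact ih2 M hM _ hs
  | interE1 h ih =>
    intro M hM s hs
    cases hs
    exact ih M hM _ (Or.inl rfl)
  | interE2 h ih =>
    intro M hM s hs
    exact ih M hM _ (Or.inr hs)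

theorem typing_arrow_inv {Γ M A B} (h : Typing Γ (.lam M) (.simple (.arrow A B))) :
    Typing (A :: Γ) M (.simple B) := by
  obtain ⟨A', B', he, ht⟩ := lam_inv h M rfl (.arrow A B) rfl
  cases he
  exact ht

theorem delta_helper {Γ a M₁} (q : Ty × Ty × STy)
    (h1 : Typing Γ (.lam (.lam a)) (.simple (mkArr q)))
    (h2 : Typing Γ M₁ q.1) :
    Typing Γ (.lam (.app (.lam (Term.swap 0 a)) (Term.lift 0 M₁)))
      (.simple (mkBC q)) := by
  obtain ⟨A, B, C⟩ := q
  have ha : Typing (B :: A :: Γ) a (.simple C) :=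
    typing_arrow_inv (typing_arrow_inv h1)
  have ha' : Typing (A :: B :: Γ) (Term.swap 0 a) (.simple C) :=
    typing_swap ha [] B A Γ rfl
  have hM' : Typing (B :: Γ) (Term.lift 0 M₁) A :=
    typing_lift h2 [] Γ B rfl
  exact .lam (.app (.lam ha') hM')

/-- If (λx.λy.a M₁) has type (B₁→C₁)∧...∧(Bₖ→Cₖ), with λx.λy.a of type
(A₁→B₁→C₁)∧...∧(Aₖ→Bₖ→Cₖ) and M₁ of type A₁∧...∧Aₖ, then its δ-reduct
λy.(λx.a M₁) can be given the same type (y not free in M₁, via lifting). -/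
theorem delta_preserves_type (Γ : List Ty) (a M₁ : Term)
    (p : Ty × Ty × STy) (l : List (Ty × Ty × STy))
    (harr : Typing Γ (.lam (.lam a)) (interSTy (mkArr p) (l.map mkArr)))
    (hM : Typing Γ M₁ (interTys p.1 (l.map (·.1))))
    (hredex : Typing Γ (.app (.lam (.lam a)) M₁)
      (interSTy (mkBC p) (l.map mkBC))) :
    Typing Γ (.lam (.app (.lam (Term.swap 0 a)) (Term.lift 0 M₁)))
      (interSTy (mkBC p) (l.map mkBC)) := by
  obtain ⟨hMp, hMl⟩ := typing_interTys hM
  refine typing_interSTy ?_ ?_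
  · exact delta_helper p (typing_of_mem _ harr (tymem_interSTy (Or.inl rfl))) hMp
  · intro s' hs'
    rcases List.mem_map.1 hs' with ⟨q, hq, rfl⟩
    refine delta_helper q ?_ ?_
    · exact typing_of_mem _ harr
        (tymem_interSTy (Or.inr (List.mem_map.2 ⟨q, hq, rfl⟩)))
    · exact hMl _ (List.mem_map.2 ⟨q, hq, rfl⟩)
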